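/- Let p be an odd prime, let (G,γ) be a ℤ/pℤ-colored graph, and let (H,γ) be obtained from (G,γ) by applying a colored Henneberg move (H2c) that adds a new vertex v, removes an edge ab with color γ_{ab}, and adds edges av, bv, cv with colors satisfying γ_{av} − γ_{bv} = γ_{ab}. Then the symmetric lift H̃ is obtained from the symmetric lift G̃ by applying p uncolored Henneberg (H2) moves, one splitting each edge in the fiber over ab and adding the corresponding degree-three vertex ṽ_δ for δ ∈ ℤ/pℤ. -/

import Mathlib

/-!
Preamble: finite directed multigraphs with edge colors in an abelian group
("colored graphs"), gain groups and ρ-rank, the Ross / cone-Laman /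
cylinder-Laman sparsity counts, colored Henneberg moves, undirected
multigraphs, (k,ℓ)-sparsity, uncolored Henneberg moves, and symmetric lifts.
-/

/-- A finite directed multigraph with edge colors in `Γ` (a "Γ-colored graph").
Self-loops and parallel edges are allowed. -/
structure CMG (Γ : Type) where
  V : Type
  E : Type
  finV : Finite V
  finE : Finite E
  src : E → V
  dst : E → V
  color : E → Γ

attribute [instance] CMG.finV CMG.finE

instance {α : Type*} [Finite α] : Finite (Option α) :=
  Finite.of_equiv _ (Equiv.optionEquivSumPUnit.{0} α).symm

namespace CMG

variable {Γ : Type} [AddCommGroup Γ]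

/-- `e` is an edge from `a` to `v` with color `c`, in the oriented sense:
either it is stored as `a → v` with color `c`, or as `v → a` with color `-c`
(reversing an edge while negating its color gives the same colored graph). -/
def IsEdgeFromTo (G : CMG Γ) (e : G.E) (a v : G.V) (c : Γ) : Prop :=
  (G.src e = a ∧ G.dst e = v ∧ G.color e = c) ∨
    (G.src e = v ∧ G.dst e = a ∧ G.color e = -c)

/-- `e` is incident to the vertex `v`. -/
def Incident (G : CMG Γ) (e : G.E) (v : G.V) : Prop :=
  G.src e = v ∨ G.dst e = v

/-- `e` is a self-loop at `v`. -/
def IsLoopAt (G : CMG Γ) (e : G.E) (v : G.V) : Prop :=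
  G.src e = v ∧ G.dst e = v

/-- The vertices of the edge-induced subgraph on the edge set `F`. -/
def vertsIn (G : CMG Γ) (F : Set G.E) : Set G.V :=
  {v | ∃ e ∈ F, G.Incident e v}

/-- `Walk G F u w γ`: there is a walk inside the edge set `F` from `u` to `w`
whose signed color sum (colors of forward-traversed edges added, colors of
backward-traversed edges subtracted) is `γ`. -/
inductive Walk (G : CMG Γ) (F : Set G.E) : G.V → G.V → Γ → Prop
  | nil (v : G.V) : Walk G F v v 0
  | fwd {x : G.V} {γ : Γ} (e : G.E) (he : e ∈ F) (hw : Walk G F (G.dst e) x γ) :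
      Walk G F (G.src e) x (G.color e + γ)
  | bwd {x : G.V} {γ : Γ} (e : G.E) (he : e ∈ F) (hw : Walk G F (G.src e) x γ) :
      Walk G F (G.dst e) x (-G.color e + γ)

/-- `u` and `w` are joined by a walk in the edge set `F`. -/
def Reaches (G : CMG Γ) (F : Set G.E) (u w : G.V) : Prop :=
  ∃ γ, G.Walk F u w γ

/-- The connected component of `v` in the edge set `F`. -/
def comp (G : CMG Γ) (F : Set G.E) (v : G.V) : Set G.V :=
  {w | G.Reaches F v w}

/-- The gain group (ρ-image) of the edge set `F` based at the vertex `v`: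
the subgroup of `Γ` generated by the signed color sums of closed walks at `v`. -/
def gainGroup (G : CMG Γ) (F : Set G.E) (v : G.V) : AddSubgroup Γ :=
  AddSubgroup.closure {γ | G.Walk F v v γ}

/-- The ρ-image of the whole edge set `F` (over all base vertices). -/
def totalGain (G : CMG Γ) (F : Set G.E) : AddSubgroup Γ :=
  AddSubgroup.closure {γ | ∃ v, G.Walk F v v γ}

end CMG

/-- The rank of a subgroup of an abelian group: the minimal cardinality of a
finite generating set. -/
noncomputable def subgroupRank {Γ : Type} [AddCommGroup Γ] (H : AddSubgroup Γ) : ℕ :=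
  sInf {n | ∃ s : Finset Γ, s.card = n ∧ AddSubgroup.closure (s : Set Γ) = H}

namespace CMG

variable {Γ : Type} [AddCommGroup Γ]

/-- The number of connected components of the edge-induced subgraph on `F`
whose ρ-rank is `i`. -/
noncomputable def compCount (G : CMG Γ) (F : Set G.E) (i : ℕ) : ℕ :=
  Set.ncard {S : Set G.V |
    ∃ v ∈ G.vertsIn F, S = G.comp F v ∧ subgroupRank (G.gainGroup F v) = i}

/-- The number of connected components of the whole graph (all vertices,
all edges) whose ρ-rank is `i`. -/
noncomputable def compCountTop (G : CMG Γ) (i : ℕ) : ℕ :=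
  Set.ncard {S : Set G.V |
    ∃ v : G.V, S = G.comp Set.univ v ∧ subgroupRank (G.gainGroup Set.univ v) = i}

/-- The Ross count `m' ≤ 2n' - 3c₀' - 2(c₁' + c₂')` for one edge set. -/
def RossCount (G : CMG Γ) (F : Set G.E) : Prop :=
  (F.ncard : ℤ) ≤ 2 * (G.vertsIn F).ncard - 3 * G.compCount F 0
    - 2 * (G.compCount F 1 + G.compCount F 2)

/-- Ross sparsity: the Ross count holds for every edge-induced subgraph. -/
def IsRossSparse (G : CMG Γ) : Prop :=
  ∀ F : Set G.E, G.RossCount F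

/-- A Ross graph: Ross-sparse and the count holds with equality on the whole
graph. -/
def IsRossGraph (G : CMG Γ) : Prop :=
  G.IsRossSparse ∧
    (Nat.card G.E : ℤ) = 2 * Nat.card G.V - 3 * G.compCountTop 0
      - 2 * (G.compCountTop 1 + G.compCountTop 2)

/-- The cone-Laman count `m' ≤ 2n' - 3c₀' - c₁' - c₂'` for one edge set. -/
def ConeLamanCount (G : CMG Γ) (F : Set G.E) : Prop :=
  (F.ncard : ℤ) ≤ 2 * (G.vertsIn F).ncard - 3 * G.compCount F 0
    - G.compCount F 1 - G.compCount F 2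

/-- Cone-Laman sparsity. -/
def IsConeLamanSparse (G : CMG Γ) : Prop :=
  ∀ F : Set G.E, G.ConeLamanCount F

/-- A cone-Laman graph: cone-Laman-sparse with equality on the whole graph. -/
def IsConeLaman (G : CMG Γ) : Prop :=
  G.IsConeLamanSparse ∧
    (Nat.card G.E : ℤ) = 2 * Nat.card G.V - 3 * G.compCountTop 0
      - G.compCountTop 1 - G.compCountTop 2

/-- The cylinder-Laman count `m' ≤ 2n' + r - 3c₀' - 2(c₁' + c₂')`. -/
def CylinderLamanCount (G : CMG Γ) (F : Set G.E) : Prop :=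
  (F.ncard : ℤ) ≤ 2 * (G.vertsIn F).ncard + subgroupRank (G.totalGain F)
    - 3 * G.compCount F 0 - 2 * (G.compCount F 1 + G.compCount F 2)

/-- Cylinder-Laman sparsity. -/
def IsCylinderLamanSparse (G : CMG Γ) : Prop :=
  ∀ F : Set G.E, G.CylinderLamanCount F

/-- A cylinder-Laman graph: cylinder-Laman-sparse with equality on the whole
graph. -/
def IsCylinderLaman (G : CMG Γ) : Prop :=
  G.IsCylinderLamanSparse ∧
    (Nat.card G.E : ℤ) = 2 * Nat.card G.V + subgroupRank (G.totalGain Set.univ)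
      - 3 * G.compCountTop 0 - 2 * (G.compCountTop 1 + G.compCountTop 2)

/-- Isomorphism of colored graphs; an edge may be reversed provided its color
is negated (which represents the same colored graph). -/
def Iso (G H : CMG Γ) : Prop :=
  ∃ (fv : G.V ≃ H.V) (fe : G.E ≃ H.E), ∀ e : G.E,
    (H.src (fe e) = fv (G.src e) ∧ H.dst (fe e) = fv (G.dst e) ∧
      H.color (fe e) = G.color e) ∨
    (H.src (fe e) = fv (G.dst e) ∧ H.dst (fe e) = fv (G.src e) ∧
      H.color (fe e) = -G.color e)

/-- Delete a vertex and all edges incident to it. -/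
def deleteVertex (G : CMG Γ) (v : G.V) : CMG Γ where
  V := {w : G.V // w ≠ v}
  E := {e : G.E // G.src e ≠ v ∧ G.dst e ≠ v}
  finV := inferInstance
  finE := inferInstance
  src := fun e => ⟨G.src e.1, e.2.1⟩
  dst := fun e => ⟨G.dst e.1, e.2.2⟩
  color := fun e => G.color e.1

/-- Add a single new directed edge from `x` to `y` with color `c`. -/
def addEdge (G : CMG Γ) (x y : G.V) (c : Γ) : CMG Γ where
  V := G.V
  E := Option G.E
  finV := inferInstance
  finE := inferInstance
  src := fun e => e.elim x G.src
  dst := fun e => e.elim y G.dst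
  color := fun e => e.elim c G.color

/-- The other endpoint of an edge incident to `v` (junk value on loops). -/
noncomputable def otherEnd (G : CMG Γ) (v : G.V) (e : G.E) : G.V :=
  @ite _ (G.src e = v) (Classical.dec _) (G.dst e) (G.src e)

/-- The color of an edge incident to `v`, read in the direction pointing into
`v` (junk value on loops). -/
noncomputable def colorInto (G : CMG Γ) (v : G.V) (e : G.E) : Γ :=
  @ite _ (G.dst e = v) (Classical.dec _) (G.color e) (-G.color e)

/-- The colored Henneberg move (H1c): `H` is obtained from `G` by adding one
new vertex `v` and two new edges `av`, `bv` (directed into `v`, which is no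
restriction); if `a = b` the two new colors must be distinct. -/
def H1cRel (G H : CMG Γ) : Prop :=
  ∃ (v a b : H.V) (_ : a ≠ v) (_ : b ≠ v) (e₁ e₂ : H.E) (γ₁ γ₂ : Γ),
    e₁ ≠ e₂ ∧
    H.IsEdgeFromTo e₁ a v γ₁ ∧ H.IsEdgeFromTo e₂ b v γ₂ ∧
    (∀ e, H.Incident e v → e = e₁ ∨ e = e₂) ∧
    (a = b → γ₁ ≠ γ₂) ∧
    Iso G (H.deleteVertex v)

/-- The colored lollipop move (H1c'): `H` is obtained from `G` by adding one
new vertex `v`, one edge `av` with arbitrary color, and one self-loop at `v`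
with nonzero color. -/
def H1cpRel (G H : CMG Γ) : Prop :=
  ∃ (v a : H.V) (_ : a ≠ v) (e₁ e₂ : H.E) (γ₁ : Γ),
    e₁ ≠ e₂ ∧
    H.IsEdgeFromTo e₁ a v γ₁ ∧
    H.IsLoopAt e₂ v ∧ H.color e₂ ≠ 0 ∧
    (∀ e, H.Incident e v → e = e₁ ∨ e = e₂) ∧
    Iso G (H.deleteVertex v)

/-- The colored Henneberg move (H2c): `H` is obtained from `G` by removing an
edge `ab` with color `γ₁ - γ₂`, adding a new vertex `v`, and adding edges
`av`, `bv`, `cv` with colors `γ₁`, `γ₂`, `γ₃` (oriented into `v`, which is no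
restriction); parallel new edges must have distinct colors. -/
def H2cRel (G H : CMG Γ) : Prop :=
  ∃ (v a b c : H.V) (ha : a ≠ v) (hb : b ≠ v) (_ : c ≠ v)
      (e₁ e₂ e₃ : H.E) (γ₁ γ₂ γ₃ : Γ),
    e₁ ≠ e₂ ∧ e₁ ≠ e₃ ∧ e₂ ≠ e₃ ∧
    H.IsEdgeFromTo e₁ a v γ₁ ∧ H.IsEdgeFromTo e₂ b v γ₂ ∧
    H.IsEdgeFromTo e₃ c v γ₃ ∧
    (∀ e, H.Incident e v → e = e₁ ∨ e = e₂ ∨ e = e₃) ∧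
    (a = b → γ₁ ≠ γ₂) ∧ (a = c → γ₁ ≠ γ₃) ∧ (b = c → γ₂ ≠ γ₃) ∧
    Iso G ((H.deleteVertex v).addEdge ⟨a, ha⟩ ⟨b, hb⟩ (γ₁ - γ₂))

/-- The base graph for Ross graphs: two vertices joined by two parallel
directed edges with distinct colors. -/
def IsRossBase (G : CMG Γ) : Prop :=
  ∃ (u v : G.V) (e₁ e₂ : G.E) (γ₁ γ₂ : Γ),
    u ≠ v ∧ e₁ ≠ e₂ ∧
    (∀ w : G.V, w = u ∨ w = v) ∧ (∀ e : G.E, e = e₁ ∨ e = e₂) ∧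
    G.IsEdgeFromTo e₁ u v γ₁ ∧ G.IsEdgeFromTo e₂ u v γ₂ ∧ γ₁ ≠ γ₂

/-- The base graph for cone-Laman and cylinder-Laman graphs: a single vertex
with one self-loop carrying a nonzero color. -/
def IsLoopBase (G : CMG Γ) : Prop :=
  ∃ (v : G.V) (e : G.E),
    (∀ w : G.V, w = v) ∧ (∀ e' : G.E, e' = e) ∧
    G.IsLoopAt e v ∧ G.color e ≠ 0

/-- `Constructible Base R G`: the colored graph `G` can be produced from a
base graph (a graph satisfying `Base`) by a finite sequence of moves from the
relation `R`. -/
inductive Constructible (Base : CMG Γ → Prop) (R : CMG Γ → CMG Γ → Prop) :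
    CMG Γ → Prop
  | base (G : CMG Γ) (h : Base G) : Constructible Base R G
  | step (G H : CMG Γ) (hG : Constructible Base R G) (hR : R G H) :
      Constructible Base R H

/-- The degree of a vertex; a self-loop contributes two. -/
noncomputable def degree (G : CMG Γ) (v : G.V) : ℕ :=
  Nat.card {e : G.E // G.src e = v} + Nat.card {e : G.E // G.dst e = v}

end CMG

/-- Reduce the colors of a `ℤ`-colored graph modulo `p`. -/
def CMG.reduceMod (G : CMG ℤ) (p : ℕ) : CMG (ZMod p) where
  V := G.V
  E := G.E
  finV := G.finV
  finE := G.finE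
  src := G.src
  dst := G.dst
  color := fun e => ((G.color e : ℤ) : ZMod p)

/-- An undirected multigraph (possibly infinite), given by the two endpoint
functions of its edges; the orientation of an edge carries no information. -/
structure UMG where
  V : Type
  E : Type
  fst : E → V
  snd : E → V

namespace UMG

/-- The edge `e` joins `u` and `w`. -/
def Betw (M : UMG) (e : M.E) (u w : M.V) : Prop :=
  (M.fst e = u ∧ M.snd e = w) ∨ (M.fst e = w ∧ M.snd e = u)

/-- `e` is incident to `v`. -/
def Incident (M : UMG) (e : M.E) (v : M.V) : Prop :=
  M.fst e = v ∨ M.snd e = v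

/-- `e` is a self-loop. -/
def IsLoop (M : UMG) (e : M.E) : Prop :=
  M.fst e = M.snd e

/-- The vertices of the edge-induced subgraph on the edge set `F`. -/
def uverts (M : UMG) (F : Set M.E) : Set M.V :=
  {v | ∃ e ∈ F, M.Incident e v}

/-- `(k,ℓ)`-sparsity: every (finite, nonempty) edge-induced subgraph with `n'`
vertices and `m'` edges satisfies `m' ≤ k n' - ℓ`. -/
def Sparse (M : UMG) (k ℓ : ℤ) : Prop :=
  ∀ F : Set M.E, F.Finite → F.Nonempty →
    (F.ncard : ℤ) ≤ k * (M.uverts F).ncard - ℓ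

/-- Laman-sparse means `(2,3)`-sparse. -/
def LamanSparse (M : UMG) : Prop :=
  M.Sparse 2 3

/-- `F` is a (finite, nonempty) violation of the Laman count. -/
def ViolatesLaman (M : UMG) (F : Set M.E) : Prop :=
  F.Finite ∧ F.Nonempty ∧ ¬ ((F.ncard : ℤ) ≤ 2 * (M.uverts F).ncard - 3)

/-- A Laman-circuit: an edge-minimal violation of Laman sparsity. -/
def LamanCircuit (M : UMG) (C : Set M.E) : Prop :=
  M.ViolatesLaman C ∧ ∀ F : Set M.E, F ⊂ C → ¬ M.ViolatesLaman F

/-- Connectivity inside an edge set. -/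
def Reaches (M : UMG) (F : Set M.E) : M.V → M.V → Prop :=
  Relation.ReflTransGen (fun u w => ∃ e ∈ F, M.Betw e u w)

/-- The edge-induced subgraph on `F` is connected. -/
def ConnectedOn (M : UMG) (F : Set M.E) : Prop :=
  ∀ u ∈ M.uverts F, ∀ w ∈ M.uverts F, M.Reaches F u w

/-- The induced sub-multigraph on a set of vertices. -/
def induce (M : UMG) (W : Set M.V) : UMG where
  V := W
  E := {e : M.E // M.fst e ∈ W ∧ M.snd e ∈ W}
  fst := fun e => ⟨M.fst e.1, e.2.1⟩
  snd := fun e => ⟨M.snd e.1, e.2.2⟩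

/-- Delete a vertex and all edges incident to it. -/
def deleteVertex (M : UMG) (v : M.V) : UMG :=
  M.induce {w | w ≠ v}

/-- Add a single new edge joining `x` and `y`. -/
def addEdge (M : UMG) (x y : M.V) : UMG where
  V := M.V
  E := Option M.E
  fst := fun e => e.elim x M.fst
  snd := fun e => e.elim y M.snd

/-- Add a family of new edges indexed by `I`. -/
def addEdges (M : UMG) (I : Type) (x y : I → M.V) : UMG where
  V := M.V
  E := M.E ⊕ I
  fst := Sum.elim M.fst x
  snd := Sum.elim M.snd y

/-- Isomorphism of undirected multigraphs. -/
def Iso (M N : UMG) : Prop :=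
  ∃ (fv : M.V ≃ N.V) (fe : M.E ≃ N.E), ∀ e : M.E,
    (N.fst (fe e) = fv (M.fst e) ∧ N.snd (fe e) = fv (M.snd e)) ∨
    (N.fst (fe e) = fv (M.snd e) ∧ N.snd (fe e) = fv (M.fst e))

/-- The other endpoint of an edge incident to `v` (junk value on loops). -/
noncomputable def otherEnd (M : UMG) (v : M.V) (e : M.E) : M.V :=
  @ite _ (M.fst e = v) (Classical.dec _) (M.snd e) (M.fst e)

/-- The uncolored Henneberg move (H1), adding the vertex `w`: `N` is obtained
from `M` by adding the new vertex `w` together with two edges joining `w` to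
the old graph. -/
def H1At (M N : UMG) (w : N.V) : Prop :=
  (∃ e₁ e₂ : N.E, e₁ ≠ e₂ ∧ N.Incident e₁ w ∧ N.Incident e₂ w ∧
      ¬ N.IsLoop e₁ ∧ ¬ N.IsLoop e₂ ∧
      ∀ e, N.Incident e w → e = e₁ ∨ e = e₂) ∧
    Iso (N.deleteVertex w) M

/-- The uncolored Henneberg move (H2), splitting an edge between `x` and `y`
and adding the new degree-three vertex `w`: `N` is obtained from `M` by
removing an edge joining `x` and `y` and adding the new vertex `w` together
with edges from `w` to `x`, `y` and some third vertex `z`. -/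
def H2SplitAt (M N : UMG) (w x y : N.V) : Prop :=
  (∃ e₁ e₂ e₃ : N.E, e₁ ≠ e₂ ∧ e₁ ≠ e₃ ∧ e₂ ≠ e₃ ∧
      N.Betw e₁ x w ∧ N.Betw e₂ y w ∧ (∃ z, z ≠ w ∧ N.Betw e₃ z w) ∧
      ∀ e, N.Incident e w → e = e₁ ∨ e = e₂ ∨ e = e₃) ∧
    ∃ (hx : x ≠ w) (hy : y ≠ w),
      Iso ((N.deleteVertex w).addEdge ⟨x, hx⟩ ⟨y, hy⟩) M

/-- The uncolored Henneberg move (H2). -/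
def H2Rel (M N : UMG) : Prop :=
  ∃ w x y : N.V, H2SplitAt M N w x y

/-- `(2,2)`-spanning: the graph contains a spanning `(2,2)`-graph. -/
def Spanning22 (M : UMG) : Prop :=
  ∃ F : Set M.E, F.Finite ∧
    (∀ F' : Set M.E, F' ⊆ F → F'.Nonempty →
      (F'.ncard : ℤ) ≤ 2 * (M.uverts F').ncard - 2) ∧
    (F.ncard : ℤ) = 2 * Nat.card M.V - 2

end UMG

namespace CMG

variable {Γ : Type} [AddCommGroup Γ]

/-- The symmetric lift of a `Γ`-colored graph: vertices `V × Γ`, and each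
directed edge `ij` of color `γ` lifts to the edges `{ĩ_δ, j̃_{γ+δ}}`. -/
def liftU (G : CMG Γ) : UMG where
  V := G.V × Γ
  E := G.E × Γ
  fst := fun e => (G.src e.1, e.2)
  snd := fun e => (G.dst e.1, G.color e.1 + e.2)

/-- The lift of an edge set: the union of the fibers over its edges. -/
def liftEdges (G : CMG Γ) (F : Set G.E) : Set (G.liftU).E :=
  {e | e.1 ∈ F}

/-- The concrete result of the colored Henneberg move (H1c) on `G`, adding a
new vertex `none` and two new edges `a → none`, `b → none` with colors
`γ₁`, `γ₂`. -/
def applyH1c (G : CMG Γ) (a b : G.V) (γ₁ γ₂ : Γ) : CMG Γ where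
  V := Option G.V
  E := G.E ⊕ Bool
  finV := inferInstance
  finE := inferInstance
  src := Sum.elim (fun e => some (G.src e)) (fun x => some (cond x b a))
  dst := Sum.elim (fun e => some (G.dst e)) (fun _ => none)
  color := Sum.elim G.color (fun x => cond x γ₂ γ₁)

/-- The concrete result of the colored Henneberg move (H2c) on `G`: the edge
`f` (from `a := src f` to `b := dst f`) is removed, a new vertex `none` is
added, and edges `a → none`, `b → none`, `c → none` with colors `γ₁`, `γ₂`,
`γ₃` are added. -/
def applyH2c (G : CMG Γ) (f : G.E) (c : G.V) (γ₁ γ₂ γ₃ : Γ) : CMG Γ where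
  V := Option G.V
  E := {e : G.E // e ≠ f} ⊕ Fin 3
  finV := inferInstance
  finE := inferInstance
  src := Sum.elim (fun e => some (G.src e.1))
    (fun i => ![some (G.src f), some (G.dst f), some c] i)
  dst := Sum.elim (fun e => some (G.dst e.1)) (fun _ => none)
  color := Sum.elim (fun e => G.color e.1) (fun i => ![γ₁, γ₂, γ₃] i)

/-- The intermediate uncolored graphs between the lift of `G` and the lift of
`applyH1c G a b γ₁ γ₂`: only the new vertices `ṽ_δ` with `δ ∈ S` (and their
incident edges) are present. -/
def h1cPartial (G : CMG Γ) (a b : G.V) (γ₁ γ₂ : Γ) (S : Set Γ) : UMG :=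
  (CMG.liftU (G.applyH1c a b γ₁ γ₂)).induce {w | w.1 ≠ none ∨ w.2 ∈ S}

/-- The intermediate uncolored graphs between the lift of `G` and the lift of
`applyH2c G f c γ₁ γ₂ γ₃`: only the new vertices `ṽ_δ` with `δ ∈ S` (and
their incident edges) are present, and for `δ ∉ S` the not-yet-split fiber
edge of `f` with endpoints `ã_{δ-γ₁}`, `b̃_{δ-γ₂}` is still present. -/
def h2cPartial (G : CMG Γ) (f : G.E) (c : G.V) (γ₁ γ₂ γ₃ : Γ) (S : Set Γ) :
    UMG :=
  UMG.addEdges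
    ((CMG.liftU (G.applyH2c f c γ₁ γ₂ γ₃)).induce {w | w.1 ≠ none ∨ w.2 ∈ S})
    {δ : Γ // δ ∉ S}
    (fun δ => ⟨(some (G.src f), δ.1 - γ₁), Or.inl (by intro h; cases h)⟩)
    (fun δ => ⟨(some (G.dst f), δ.1 - γ₂), Or.inl (by intro h; cases h)⟩)

end CMG

/-!
By `γ₁ - γ₂ = γ_f`, the fiber edge of `f` that starts at `ã_{δ-γ₁}` ends at `b̃_{δ-γ₂}`, and these
are exactly two of the three neighbours `ã_{δ-γ₁}`, `b̃_{δ-γ₂}`, `c̃_{δ-γ₃}` of the new lifted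
vertex `ṽ_δ`. So inserting the vertices `ṽ_δ` one at a time, each replacing the fiber edge
indexed by `δ`, is a sequence of uncolored Henneberg splits, running from the lift of `G` (no
`ṽ_δ` yet) to the lift of the new graph (all of them).
-/

namespace UMG

theorem Iso.of_equiv {M N : UMG} (fv : M.V ≃ N.V) (fe : M.E ≃ N.E)
    (hfst : ∀ e, N.fst (fe e) = fv (M.fst e)) (hsnd : ∀ e, N.snd (fe e) = fv (M.snd e)) :
    Iso M N :=
  ⟨fv, fe, fun e => Or.inl ⟨hfst e, hsnd e⟩⟩

theorem Iso.trans {M N P : UMG} (h₁ : Iso M N) (h₂ : Iso N P) : Iso M P := by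
  obtain ⟨fv, fe, hf⟩ := h₁
  obtain ⟨gv, ge, hg⟩ := h₂
  refine ⟨fv.trans gv, fe.trans ge, fun e => ?_⟩
  simp only [Equiv.trans_apply]
  rcases hf e with ⟨h₁, h₂⟩ | ⟨h₁, h₂⟩ <;> rcases hg (fe e) with ⟨h₃, h₄⟩ | ⟨h₃, h₄⟩ <;>
    simp only [h₁, h₂, h₃, h₄, and_self, or_true, true_or]

theorem iso_induce_of_forall_mem (M : UMG) {W : Set M.V} (hW : ∀ v, v ∈ W) :
    Iso (M.induce W) M :=
  Iso.of_equiv (Equiv.subtypeUnivEquiv hW) (Equiv.subtypeUnivEquiv fun _ => ⟨hW _, hW _⟩)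
    (fun _ => rfl) (fun _ => rfl)

theorem iso_addEdges_of_isEmpty (M : UMG) (I : Type) [IsEmpty I] (x y : I → M.V) :
    Iso (M.addEdges I x y) M :=
  Iso.of_equiv (Equiv.refl _) (Equiv.sumEmpty _ _)
    (Sum.rec (fun _ => rfl) isEmptyElim) (Sum.rec (fun _ => rfl) isEmptyElim)

end UMG

namespace CMG

section PartialVertices

variable {α β : Type} {S : Set β} {δ : β} {u : Option α × β}

theorem mem_of_mem_insert_of_ne (h : u.1 ≠ none ∨ u.2 ∈ insert δ S) (hne : u ≠ (none, δ)) :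
    u.1 ≠ none ∨ u.2 ∈ S := by
  by_cases hu : u.1 = none
  · refine Or.inr ((Set.mem_insert_iff.1 (h.resolve_left (not_not.2 hu))).resolve_left ?_)
    exact fun h₂ => hne (Prod.ext hu h₂)
  · exact Or.inl hu

theorem ne_mk_none_of_mem (hδ : δ ∉ S) (h : u.1 ≠ none ∨ u.2 ∈ S) : u ≠ (none, δ) := by
  rintro rfl
  exact h.elim (· rfl) hδ

theorem ne_none_of_mem_empty (h : u.1 ≠ none ∨ u.2 ∈ (∅ : Set β)) : u.1 ≠ none :=
  h.resolve_right (Set.notMem_empty _)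

def optionProdEquivOfEmpty : {u : Option α × β // u.1 ≠ none ∨ u.2 ∈ (∅ : Set β)} ≃ α × β where
  toFun
    | ⟨(some a, t), _⟩ => (a, t)
    | ⟨(none, _), h⟩ => absurd rfl (ne_none_of_mem_empty h)
  invFun v := ⟨(some v.1, v.2), Or.inl (Option.some_ne_none _)⟩
  left_inv
    | ⟨(some _, _), _⟩ => rfl
    | ⟨(none, _), h⟩ => absurd rfl (ne_none_of_mem_empty h)
  right_inv _ := rfl

end PartialVertices

theorem h2cPartial_mk_some_ne_mk_none {Γ : Type} [AddCommGroup Γ] {G : CMG Γ} {f : G.E}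
    {c : G.V} {γ₁ γ₂ γ₃ : Γ} {S : Set Γ} {v : G.V} {t s : Γ} {hv hn} :
    (⟨(some v, t), hv⟩ : (G.h2cPartial f c γ₁ γ₂ γ₃ S).V) ≠ ⟨(none, s), hn⟩ :=
  fun h => Option.some_ne_none _ (congrArg (fun u => (Subtype.val u).1) h)

section H2cLift

variable {Γ : Type} (G : CMG Γ) (f : G.E) (c : G.V) (γ₁ γ₂ γ₃ : Γ)

theorem applyH2c_src_ne_none : ∀ e, (G.applyH2c f c γ₁ γ₂ γ₃).src e ≠ none
  | Sum.inl _ => Option.some_ne_none _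
  | Sum.inr i => by fin_cases i <;> exact Option.some_ne_none _

variable [AddCommGroup Γ]

open Classical in
noncomputable def h2cPartialEmptyEdgeEquiv : (G.h2cPartial f c γ₁ γ₂ γ₃ ∅).E ≃ G.liftU.E where
  toFun
    | Sum.inl ⟨(Sum.inl e, t), _⟩ => (e.1, t)
    | Sum.inl ⟨(Sum.inr _, _), h⟩ => absurd rfl (ne_none_of_mem_empty h.2)
    | Sum.inr δ => (f, δ.1 - γ₁)
  invFun e :=
    if h : e.1 = f then Sum.inr ⟨e.2 + γ₁, Set.notMem_empty _⟩
    else Sum.inl ⟨(Sum.inl ⟨e.1, h⟩, e.2), Or.inl (Option.some_ne_none _),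
      Or.inl (Option.some_ne_none _)⟩
  left_inv
    | Sum.inl ⟨(Sum.inl e, t), _⟩ => dif_neg e.2
    | Sum.inl ⟨(Sum.inr _, _), h⟩ => absurd rfl (ne_none_of_mem_empty h.2)
    | Sum.inr δ => (dif_pos rfl).trans (congrArg Sum.inr (Subtype.ext (sub_add_cancel _ _)))
  right_inv
    | (e, t) => by
      by_cases h : e = f
      · subst e
        dsimp only
        erw [dif_pos rfl]
        exact Prod.ext rfl (add_sub_cancel_right _ _)
      · dsimp only
        erw [dif_neg h]

theorem h2cPartial_empty_iso (hsplit : γ₁ - γ₂ = G.color f) :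
    UMG.Iso (G.h2cPartial f c γ₁ γ₂ γ₃ ∅) G.liftU := by
  refine UMG.Iso.of_equiv optionProdEquivOfEmpty (G.h2cPartialEmptyEdgeEquiv f c γ₁ γ₂ γ₃) ?_ ?_
  · rintro (⟨⟨_ | _, _⟩, h⟩ | _)
    · rfl
    · exact absurd rfl (ne_none_of_mem_empty h.2)
    · rfl
  · rintro (⟨⟨_ | _, _⟩, h⟩ | δ)
    · rfl
    · exact absurd rfl (ne_none_of_mem_empty h.2)
    · show (G.dst f, G.color f + (δ.1 - γ₁)) = (G.dst f, δ.1 - γ₂)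
      rw [← hsplit]
      congr 1
      abel

theorem h2cPartial_univ_iso :
    UMG.Iso (G.h2cPartial f c γ₁ γ₂ γ₃ Set.univ) (G.applyH2c f c γ₁ γ₂ γ₃).liftU :=
  haveI : IsEmpty {δ : Γ // δ ∉ Set.univ} := ⟨fun δ => δ.2 trivial⟩
  (UMG.iso_addEdges_of_isEmpty _ _ _ _).trans
    (UMG.iso_induce_of_forall_mem _ fun _ => Or.inr trivial)

section Split

variable (S : Set Γ) (δ : Γ)

def h2cSpoke (i : Fin 3) : (G.h2cPartial f c γ₁ γ₂ γ₃ (insert δ S)).E :=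
  Sum.inl ⟨(Sum.inr i, δ - ![γ₁, γ₂, γ₃] i),
    Or.inl (G.applyH2c_src_ne_none f c γ₁ γ₂ γ₃ (Sum.inr i)),
    Or.inr (show ![γ₁, γ₂, γ₃] i + (δ - ![γ₁, γ₂, γ₃] i) ∈ insert δ S by
      rw [add_sub_cancel]; exact Set.mem_insert δ S)⟩

theorem h2cSpoke_injective : Function.Injective (G.h2cSpoke f c γ₁ γ₂ γ₃ S δ) :=
  fun _ _ h => Sum.inr_injective (congrArg (·.1.1) (Sum.inl_injective h))

theorem h2cSpoke_betw (i : Fin 3) :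
    (G.h2cPartial f c γ₁ γ₂ γ₃ (insert δ S)).Betw (G.h2cSpoke f c γ₁ γ₂ γ₃ S δ i)
      ⟨(![some (G.src f), some (G.dst f), some c] i, δ - ![γ₁, γ₂, γ₃] i),
        Or.inl (G.applyH2c_src_ne_none f c γ₁ γ₂ γ₃ (Sum.inr i))⟩
      ⟨(none, δ), Or.inr (Set.mem_insert δ S)⟩ :=
  Or.inl ⟨rfl, Subtype.ext (Prod.ext rfl (add_sub_cancel _ _))⟩

theorem exists_eq_h2cSpoke_of_incident (e : (G.h2cPartial f c γ₁ γ₂ γ₃ (insert δ S)).E)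
    (he : (G.h2cPartial f c γ₁ γ₂ γ₃ (insert δ S)).Incident e
      ⟨(none, δ), Or.inr (Set.mem_insert δ S)⟩) :
    ∃ i, e = G.h2cSpoke f c γ₁ γ₂ γ₃ S δ i := by
  rcases e with ⟨⟨e | i, t⟩, _⟩ | d
  · exact he.elim (fun h => nomatch congrArg (·.1.1) h) (fun h => nomatch congrArg (·.1.1) h)
  · refine ⟨i, ?_⟩
    have ht : ![γ₁, γ₂, γ₃] i + t = δ := by
      rcases he with h | h
      · exact absurd (congrArg (·.1.1) h) (G.applyH2c_src_ne_none f c γ₁ γ₂ γ₃ (Sum.inr i))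
      · exact congrArg (·.1.2) h
    obtain rfl : t = δ - ![γ₁, γ₂, γ₃] i := by rw [← ht, add_sub_cancel_left]
    rfl
  · exact he.elim (fun h => nomatch congrArg (·.1.1) h) (fun h => nomatch congrArg (·.1.1) h)

variable {S δ}

def h2cSplitVertexEquiv (hδ : δ ∉ S) :
    ((G.h2cPartial f c γ₁ γ₂ γ₃ (insert δ S)).deleteVertex
      ⟨(none, δ), Or.inr (Set.mem_insert δ S)⟩).V ≃ (G.h2cPartial f c γ₁ γ₂ γ₃ S).V where
  toFun u := ⟨u.1.1, mem_of_mem_insert_of_ne u.1.2 fun h => u.2 (Subtype.ext h)⟩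
  invFun v := ⟨⟨v.1, v.2.imp id (Set.mem_insert_of_mem δ)⟩,
    fun h => ne_mk_none_of_mem hδ v.2 (congrArg Subtype.val h)⟩
  left_inv _ := rfl
  right_inv _ := rfl

open Classical in
noncomputable def h2cSplitEdgeEquiv (hδ : δ ∉ S) :
    Option ((G.h2cPartial f c γ₁ γ₂ γ₃ (insert δ S)).deleteVertex
      ⟨(none, δ), Or.inr (Set.mem_insert δ S)⟩).E ≃ (G.h2cPartial f c γ₁ γ₂ γ₃ S).E where
  toFun
    | none => Sum.inr ⟨δ, hδ⟩
    | some ⟨Sum.inl ⟨e, he⟩, hne⟩ =>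
        Sum.inl ⟨e, mem_of_mem_insert_of_ne he.1 fun h => hne.1 (Subtype.ext h),
          mem_of_mem_insert_of_ne he.2 fun h => hne.2 (Subtype.ext h)⟩
    | some ⟨Sum.inr d, _⟩ => Sum.inr ⟨d.1, fun h => d.2 (Set.mem_insert_of_mem δ h)⟩
  invFun
    | Sum.inl ⟨e, he⟩ =>
        some ⟨Sum.inl ⟨e, he.1.imp id (Set.mem_insert_of_mem δ),
            he.2.imp id (Set.mem_insert_of_mem δ)⟩,
          fun h => ne_mk_none_of_mem hδ he.1 (congrArg Subtype.val h),
          fun h => ne_mk_none_of_mem hδ he.2 (congrArg Subtype.val h)⟩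
    | Sum.inr ⟨d, hd⟩ =>
        if h : d = δ then none
        else some ⟨Sum.inr ⟨d, fun hm => (Set.mem_insert_iff.1 hm).elim h hd⟩,
          h2cPartial_mk_some_ne_mk_none, h2cPartial_mk_some_ne_mk_none⟩
  left_inv
    | none => dif_pos rfl
    | some ⟨Sum.inl _, _⟩ => rfl
    | some ⟨Sum.inr ⟨d, hd⟩, _⟩ => dif_neg fun h => hd (Set.mem_insert_iff.2 (Or.inl h))
  right_inv := by
    rintro (_ | ⟨d, hd⟩)
    · rfl
    · by_cases h : d = δ
      · subst h
        dsimp only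
        erw [dif_pos rfl]
      · dsimp only
        erw [dif_neg h]

theorem h2cPartial_deleteVertex_addEdge_iso (hδ : δ ∉ S) :
    UMG.Iso (((G.h2cPartial f c γ₁ γ₂ γ₃ (insert δ S)).deleteVertex
        ⟨(none, δ), Or.inr (Set.mem_insert δ S)⟩).addEdge
        ⟨⟨(some (G.src f), δ - γ₁), Or.inl (by intro h; cases h)⟩,
          h2cPartial_mk_some_ne_mk_none⟩
        ⟨⟨(some (G.dst f), δ - γ₂), Or.inl (by intro h; cases h)⟩,
          h2cPartial_mk_some_ne_mk_none⟩)
      (G.h2cPartial f c γ₁ γ₂ γ₃ S) := by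
  refine UMG.Iso.of_equiv (G.h2cSplitVertexEquiv f c γ₁ γ₂ γ₃ hδ)
    (G.h2cSplitEdgeEquiv f c γ₁ γ₂ γ₃ hδ) ?_ ?_ <;>
  rintro (_ | ⟨_ | _, _⟩) <;> rfl

theorem h2cPartial_h2SplitAt (hδ : δ ∉ S) :
    UMG.H2SplitAt (G.h2cPartial f c γ₁ γ₂ γ₃ S) (G.h2cPartial f c γ₁ γ₂ γ₃ (insert δ S))
      ⟨(none, δ), Or.inr (Set.mem_insert δ S)⟩
      ⟨(some (G.src f), δ - γ₁), Or.inl (by intro h; cases h)⟩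
      ⟨(some (G.dst f), δ - γ₂), Or.inl (by intro h; cases h)⟩ := by
  have hspoke := G.h2cSpoke_injective f c γ₁ γ₂ γ₃ S δ
  have hbetw := G.h2cSpoke_betw f c γ₁ γ₂ γ₃ S δ
  refine ⟨⟨_, _, _, hspoke.ne (by decide : (0 : Fin 3) ≠ 1),
      hspoke.ne (by decide : (0 : Fin 3) ≠ 2), hspoke.ne (by decide : (1 : Fin 3) ≠ 2),
      hbetw 0, hbetw 1, ⟨_, h2cPartial_mk_some_ne_mk_none, hbetw 2⟩, fun e he => ?_⟩,
    h2cPartial_mk_some_ne_mk_none, h2cPartial_mk_some_ne_mk_none,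
    G.h2cPartial_deleteVertex_addEdge_iso f c γ₁ γ₂ γ₃ hδ⟩
  obtain ⟨i, rfl⟩ := G.exists_eq_h2cSpoke_of_incident f c γ₁ γ₂ γ₃ S δ e he
  fin_cases i <;> simp

end Split

end H2cLift

end CMG

/-- Let `p` be an odd prime and let `H` be obtained from the
`ℤ/pℤ`-colored graph `G` by a colored Henneberg move (H2c): the edge `f`
(from `a := src f` to `b := dst f`) is removed, a new vertex `v` is added, and
edges `av`, `bv`, `cv` with colors `γ₁`, `γ₂`, `γ₃` satisfying
`γ₁ - γ₂ = γ_f` are added.  Then the symmetric lift of `H` is obtained from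
the symmetric lift of `G` by `p` uncolored Henneberg (H2) moves, one splitting
each fiber edge of `f` (the one with endpoints `ã_{δ-γ₁}`, `b̃_{δ-γ₂}`) and
adding the corresponding degree-three vertex `ṽ_δ`. -/
theorem h2c_lift (p : ℕ)
    (G : CMG (ZMod p)) (f : G.E) (c : G.V) (γ₁ γ₂ γ₃ : ZMod p)
    (hsplit : γ₁ - γ₂ = G.color f) :
    UMG.Iso (G.h2cPartial f c γ₁ γ₂ γ₃ ∅) (CMG.liftU G) ∧
    UMG.Iso (G.h2cPartial f c γ₁ γ₂ γ₃ Set.univ)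
      (CMG.liftU (G.applyH2c f c γ₁ γ₂ γ₃)) ∧
    ∀ (S : Set (ZMod p)) (δ : ZMod p), δ ∉ S →
      UMG.H2SplitAt (G.h2cPartial f c γ₁ γ₂ γ₃ S)
        (G.h2cPartial f c γ₁ γ₂ γ₃ (insert δ S))
        ⟨(none, δ), Or.inr (Set.mem_insert δ S)⟩
        ⟨(some (G.src f), δ - γ₁), Or.inl (by intro h; cases h)⟩
        ⟨(some (G.dst f), δ - γ₂), Or.inl (by intro h; cases h)⟩ :=
  ⟨G.h2cPartial_empty_iso f c γ₁ γ₂ γ₃ hsplit, G.h2cPartial_univ_iso f c γ₁ γ₂ γ₃,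
    fun _ _ hδ => G.h2cPartial_h2SplitAt f c γ₁ γ₂ γ₃ hδ⟩
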